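/- Let A, Y, R, Z, I be discrete random variables on a finite probability space with all joint probabilities positive. Suppose (i) I ⟂ (A, Y, Z) (I is jointly independent of A, Y, Z), and (ii) p(R | A, Y, Z, I) = p(R | Y, Z, I) (the missingness mechanism depends only on Y, Z, I). Then A ⟂ I | (Y, R, Z), i.e., condition C2 of the paper holds. -/

import Mathlib

open scoped Classical
open Finset

/-- Probability of an event under a pmf on a finite sample space. -/
noncomputable def Pr {Ω : Type*} [Fintype Ω] (μ : Ω → ℝ) (P : Ω → Prop) : ℝ :=
  ∑ ω, if P ω then μ ω else 0

/-- Conditional probability `p(P | Q)`. -/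
noncomputable def cPr {Ω : Type*} [Fintype Ω] (μ : Ω → ℝ) (P Q : Ω → Prop) : ℝ :=
  Pr μ (fun ω => P ω ∧ Q ω) / Pr μ Q

lemma Pr_congr {Ω : Type*} [Fintype Ω] (μ : Ω → ℝ) {P Q : Ω → Prop}
    (h : ∀ ω, P ω ↔ Q ω) : Pr μ P = Pr μ Q := by
  unfold Pr
  exact Finset.sum_congr rfl fun ω _ => by simp [h ω]

lemma Pr_mono {Ω : Type*} [Fintype Ω] {μ : Ω → ℝ} (hμ : ∀ ω, 0 ≤ μ ω)
    {P Q : Ω → Prop} (h : ∀ ω, P ω → Q ω) : Pr μ P ≤ Pr μ Q := by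
  unfold Pr
  refine Finset.sum_le_sum fun ω _ => ?_
  by_cases hP : P ω
  · simp [hP, h ω hP]
  · simp only [hP, if_false]
    split_ifs <;> simp [hμ ω]

lemma Pr_partition {Ω 𝓘 : Type*} [Fintype Ω] (μ : Ω → ℝ) (S : Ω → Prop) (I : Ω → 𝓘) :
    Pr μ S = ∑ i ∈ Finset.univ.image I, Pr μ (fun ω => S ω ∧ I ω = i) := by
  unfold Pr
  rw [Finset.sum_comm]
  refine Finset.sum_congr rfl fun ω _ => ?_
  by_cases hS : S ω
  · simp only [hS, true_and]
    rw [Finset.sum_ite_eq (Finset.univ.image I) (I ω) (fun _ => μ ω)]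
    simp
  · simp [hS]

theorem randomized_incentive_implies_C2
    {Ω 𝓐 𝓨 𝓩 𝓘 : Type*} [Fintype Ω]
    (μ : Ω → ℝ) (hμ : ∀ ω, 0 ≤ μ ω) (hsum : ∑ ω, μ ω = 1)
    (A : Ω → 𝓐) (Y : Ω → 𝓨) (R : Ω → ℕ) (Z : Ω → 𝓩) (I : Ω → 𝓘)
    (hbin : ∀ ω, R ω = 0 ∨ R ω = 1)
    (hpos : ∀ (a : 𝓐) (y : 𝓨) (z : 𝓩) (i : 𝓘) (r : ℕ), r = 0 ∨ r = 1 →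
      0 < Pr μ (fun ω => A ω = a ∧ Y ω = y ∧ Z ω = z ∧ I ω = i ∧ R ω = r))
    (hrand : ∀ (i : 𝓘) (a : 𝓐) (y : 𝓨) (z : 𝓩),
      Pr μ (fun ω => I ω = i ∧ A ω = a ∧ Y ω = y ∧ Z ω = z) =
      Pr μ (fun ω => I ω = i) * Pr μ (fun ω => A ω = a ∧ Y ω = y ∧ Z ω = z))
    (hmech : ∀ (r : ℕ) (a : 𝓐) (y : 𝓨) (z : 𝓩) (i : 𝓘),
      cPr μ (fun ω => R ω = r) (fun ω => A ω = a ∧ Y ω = y ∧ Z ω = z ∧ I ω = i) =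
      cPr μ (fun ω => R ω = r) (fun ω => Y ω = y ∧ Z ω = z ∧ I ω = i)) :
    ∀ (a : 𝓐) (i : 𝓘) (y : 𝓨) (r : ℕ) (z : 𝓩), r = 0 ∨ r = 1 →
      cPr μ (fun ω => A ω = a ∧ I ω = i) (fun ω => Y ω = y ∧ R ω = r ∧ Z ω = z) =
      cPr μ (fun ω => A ω = a) (fun ω => Y ω = y ∧ R ω = r ∧ Z ω = z) *
        cPr μ (fun ω => I ω = i) (fun ω => Y ω = y ∧ R ω = r ∧ Z ω = z) := by
  intro a i y r z hr
  -- abbreviations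
  set g : 𝓐 → ℝ := fun a' => Pr μ (fun ω => A ω = a' ∧ Y ω = y ∧ Z ω = z) with hg
  set h : 𝓘 → ℝ := fun i' =>
    cPr μ (fun ω => R ω = r) (fun ω => Y ω = y ∧ Z ω = z ∧ I ω = i') *
      Pr μ (fun ω => I ω = i') with hh
  -- key factorization
  have key : ∀ (a' : 𝓐) (i' : 𝓘),
      Pr μ (fun ω => (A ω = a' ∧ I ω = i') ∧ (Y ω = y ∧ R ω = r ∧ Z ω = z)) =
        g a' * h i' := by
    intro a' i'
    have hQpos : 0 < Pr μ (fun ω => A ω = a' ∧ Y ω = y ∧ Z ω = z ∧ I ω = i') := by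
      refine lt_of_lt_of_le (hpos a' y z i' r hr) (Pr_mono hμ ?_)
      rintro ω ⟨h1, h2, h3, h4, _⟩
      exact ⟨h1, h2, h3, h4⟩
    have e1 : Pr μ (fun ω => (A ω = a' ∧ I ω = i') ∧ (Y ω = y ∧ R ω = r ∧ Z ω = z)) =
        Pr μ (fun ω => R ω = r ∧ (A ω = a' ∧ Y ω = y ∧ Z ω = z ∧ I ω = i')) :=
      Pr_congr μ (fun ω => by tauto)
    have e2 : Pr μ (fun ω => R ω = r ∧ (A ω = a' ∧ Y ω = y ∧ Z ω = z ∧ I ω = i')) =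
        cPr μ (fun ω => R ω = r) (fun ω => A ω = a' ∧ Y ω = y ∧ Z ω = z ∧ I ω = i') *
          Pr μ (fun ω => A ω = a' ∧ Y ω = y ∧ Z ω = z ∧ I ω = i') := by
      rw [cPr, div_mul_cancel₀]
      exact ne_of_gt hQpos
    have e3 : Pr μ (fun ω => A ω = a' ∧ Y ω = y ∧ Z ω = z ∧ I ω = i') =
        Pr μ (fun ω => I ω = i' ∧ A ω = a' ∧ Y ω = y ∧ Z ω = z) :=
      Pr_congr μ (fun ω => by tauto)
    rw [e1, e2, hmech, e3, hrand]
    simp only [hg, hh]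
    ring
  have hcongr : ∀ (P : Ω → Prop) (i' : 𝓘),
      (∀ ω, (P ω ∧ I ω = i') ↔ ((P ω ∧ I ω = i') )) := fun _ _ ω => Iff.rfl
  set G : ℝ := ∑ a' ∈ Finset.univ.image A, g a' with hG
  set H : ℝ := ∑ i' ∈ Finset.univ.image I, h i' with hH
  -- marginal over I
  have margA : ∀ a' : 𝓐,
      Pr μ (fun ω => A ω = a' ∧ (Y ω = y ∧ R ω = r ∧ Z ω = z)) = g a' * H := by
    intro a'
    rw [Pr_partition μ _ I, hH, Finset.mul_sum]
    refine Finset.sum_congr rfl fun i' _ => ?_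
    rw [← key a' i']
    exact Pr_congr μ (fun ω => by tauto)
  have margI : ∀ i' : 𝓘,
      Pr μ (fun ω => I ω = i' ∧ (Y ω = y ∧ R ω = r ∧ Z ω = z)) = G * h i' := by
    intro i'
    rw [Pr_partition μ _ A, hG, Finset.sum_mul]
    refine Finset.sum_congr rfl fun a' _ => ?_
    rw [← key a' i']
    exact Pr_congr μ (fun ω => by tauto)
  have margE : Pr μ (fun ω => Y ω = y ∧ R ω = r ∧ Z ω = z) = G * H := by
    rw [Pr_partition μ _ A, hG, Finset.sum_mul]
    refine Finset.sum_congr rfl fun a' _ => ?_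
    rw [← margA a']
    exact Pr_congr μ (fun ω => by tauto)
  have hEpos : 0 < Pr μ (fun ω => Y ω = y ∧ R ω = r ∧ Z ω = z) := by
    refine lt_of_lt_of_le (hpos a y z i r hr) (Pr_mono hμ ?_)
    rintro ω ⟨_, h2, h3, _, h5⟩
    exact ⟨h2, h5, h3⟩
  have hGH : G * H ≠ 0 := by rw [← margE]; exact ne_of_gt hEpos
  unfold cPr
  rw [key a i, margA a, margI i, margE]
  field_simp
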